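/- Define a(t) = (t^6 + 3t^5 - 5t^3 + 12t + 11)/(2(t^2+t-1)^3), b(t) = -3(t^2+1)(t^4+3t^3-t^2-3t+1)/((t^2+t-1)^3), c(t) = -(11t^6 - 12t^5 + 5t^3 - 3t + 1)/(2(t^2+t-1)^3). Let x(u) = u^2(u-1)/(u+1), y(u) = (u^2+1)(u^4-2u^3-6u^2+2u+1)/(2(u+1)^2), and s(u) = a(t)x(u)^2 + b(t)x(u) + c(t). Then for every t ∉ {0, -1, 1, roots of t^2+t-1}, the function u ↦ s(u) - y(u) vanishes to order at least 3 at u = t. -/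

import Mathlib

/-- The parametrization `x(u)` of the trigonal curve. -/
noncomputable def paramX (u : ℝ) : ℝ := u ^ 2 * (u - 1) / (u + 1)

/-- The parametrization `y(u)` of the trigonal curve. -/
noncomputable def paramY (u : ℝ) : ℝ :=
  (u ^ 2 + 1) * (u ^ 4 - 2 * u ^ 3 - 6 * u ^ 2 + 2 * u + 1) / (2 * (u + 1) ^ 2)

/-- Coefficient `a(t)` of the inflection-tangent section. -/
noncomputable def inflA (t : ℝ) : ℝ :=
  (t ^ 6 + 3 * t ^ 5 - 5 * t ^ 3 + 12 * t + 11) / (2 * (t ^ 2 + t - 1) ^ 3)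

/-- Coefficient `b(t)` of the inflection-tangent section. -/
noncomputable def inflB (t : ℝ) : ℝ :=
  -3 * (t ^ 2 + 1) * (t ^ 4 + 3 * t ^ 3 - t ^ 2 - 3 * t + 1) / ((t ^ 2 + t - 1) ^ 3)

/-- Coefficient `c(t)` of the inflection-tangent section. -/
noncomputable def inflC (t : ℝ) : ℝ :=
  -(11 * t ^ 6 - 12 * t ^ 5 + 5 * t ^ 3 - 3 * t + 1) / (2 * (t ^ 2 + t - 1) ^ 3)

/-!
Clearing denominators, `s(u) - y(u) = (u - t)^3 * r(u)` with
`r(u) = 3 P(u) / (2 (t^2 + t - 1)^3 (u + 1)^2)` for a cubic `P`, and `r` is smooth near `u = t`.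
A cube `(u - t)^3` times a `C²` function has vanishing value, first and second derivative at `t`.
-/

open Filter Topology

section VanishingOrder

variable {𝕜 : Type*} [NontriviallyNormedField 𝕜] {g r : 𝕜 → 𝕜} {t : 𝕜}

theorem hasDerivAt_sub_pow_three_mul {u : 𝕜} (hr : DifferentiableAt 𝕜 r u) :
    HasDerivAt (fun v => (v - t) ^ 3 * r v)
      (3 * (u - t) ^ 2 * r u + (u - t) ^ 3 * deriv r u) u := by
  simpa using (((hasDerivAt_id' u).sub_const t).fun_pow 3).fun_mul hr.hasDerivAt

theorem vanishing_to_order_three_of_eventuallyEq_sub_pow_three_mul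
    (hr : ContDiffAt 𝕜 2 r t) (hg : g =ᶠ[𝓝 t] fun u => (u - t) ^ 3 * r u) :
    g t = 0 ∧ deriv g t = 0 ∧ deriv (deriv g) t = 0 := by
  have hr_near : ∀ᶠ u in 𝓝 t, DifferentiableAt 𝕜 r u :=
    (hr.eventually (by simp)).mono fun u hu => hu.differentiableAt (by simp)
  have hr' : DifferentiableAt 𝕜 (deriv r) t :=
    (hr.derivWithin (m := 1) (by norm_num)).differentiableAt one_ne_zero
  have hdg : deriv g =ᶠ[𝓝 t] fun u => 3 * (u - t) ^ 2 * r u + (u - t) ^ 3 * deriv r u := by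
    filter_upwards [hg.deriv, hr_near] with u hgu hru
    rw [hgu, (hasDerivAt_sub_pow_three_mul hru).deriv]
  have hsq := ((((hasDerivAt_id' t).sub_const t).fun_pow 2).const_mul 3).fun_mul
    hr_near.self_of_nhds.hasDerivAt
  refine ⟨by simp [hg.eq_of_nhds], ?_, ?_⟩
  · simp [hdg.eq_of_nhds]
  · rw [hdg.deriv_eq, (hsq.fun_add (hasDerivAt_sub_pow_three_mul hr')).deriv]
    simp

end VanishingOrder

noncomputable def inflRemainder (t u : ℝ) : ℝ :=
  3 * ((3 * t + 4) * u ^ 3 + (9 * t ^ 2 + 6 * t - 8) * u ^ 2 +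
      (8 * t ^ 3 + 6 * t ^ 2 - 9 * t) * u + (4 * t ^ 3 - 3 * t ^ 2)) /
    (2 * (t ^ 2 + t - 1) ^ 3 * (u + 1) ^ 2)

theorem contDiffAt_inflRemainder {t u : ℝ} (h : t ^ 2 + t - 1 ≠ 0) (hu : u + 1 ≠ 0) :
    ContDiffAt ℝ 2 (inflRemainder t) u :=
  ContDiffAt.div (by fun_prop) (by fun_prop) (by positivity)

theorem inflSection_sub_paramY {t u : ℝ} (h : t ^ 2 + t - 1 ≠ 0) (hu : u + 1 ≠ 0) :
    inflA t * paramX u ^ 2 + inflB t * paramX u + inflC t - paramY u =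
      (u - t) ^ 3 * inflRemainder t u := by
  -- `field_simp` presents the denominator `t ^ 2 + t - 1` in Horner form
  have h' : t * (t + 1) - 1 ≠ 0 := by
    convert h using 1; ring
  simp only [inflA, inflB, inflC, paramX, paramY, inflRemainder]
  field_simp
  ring

theorem stmt10_general (t : ℝ) (h1 : t ≠ -1)
    (h3 : t ^ 2 + t - 1 ≠ 0) :
    let g : ℝ → ℝ := fun u =>
      (inflA t * (paramX u) ^ 2 + inflB t * paramX u + inflC t) - paramY u
    g t = 0 ∧ deriv g t = 0 ∧ deriv (deriv g) t = 0 := by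
  intro g
  have ht : t + 1 ≠ 0 := fun h => h1 (eq_neg_of_add_eq_zero_left h)
  refine vanishing_to_order_three_of_eventuallyEq_sub_pow_three_mul
    (contDiffAt_inflRemainder h3 ht) ?_
  filter_upwards [(continuousAt_id.add continuousAt_const).eventually_ne ht] with u hu
  exact inflSection_sub_paramY h3 hu

theorem stmt10 (t : ℝ) (h0 : t ≠ 0) (h1 : t ≠ -1) (h2 : t ≠ 1)
    (h3 : t ^ 2 + t - 1 ≠ 0) :
    let g : ℝ → ℝ := fun u =>
      (inflA t * (paramX u) ^ 2 + inflB t * paramX u + inflC t) - paramY u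
    g t = 0 ∧ deriv g t = 0 ∧ deriv (deriv g) t = 0 :=
  stmt10_general t h1 h3
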